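/- arXiv:2106.07021 — 2 statements merged into one kernel-verified Lean document; each statement's English description precedes it below -/
import Mathlib

section
/- In a noncanonical game of 2m+1 rounds (m ≥ 1) on ℂ^n in which player 1 makes the first and the last move, if both players use the same action group, i.e. A = B is a subgroup of the unitary group U(n) that contains every n×n permutation matrix, then player 1 has no strong winning strategy: for every sequence A_1, …, A_m, A_{m+1} ∈ A there exists a sequence B_1, …, B_m ∈ B such that A_{m+1} B_m A_m ⋯ B_1 A_1 e_{q0} ≠ e_{qA}. -/
/-- The product of the moves in a canonical `2m`-round game, namely
`B_m * A_m * ⋯ * B_1 * A_1`, where player 1 plays `A_1, …, A_m` at odd rounds and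
player 2 plays `B_1, …, B_m` at even rounds. -/
noncomputable def canonicalProd {n m : ℕ} (As Bs : Fin m → Matrix (Fin n) (Fin n) ℂ) :
    Matrix (Fin n) (Fin n) ℂ :=
  ((List.ofFn fun i => Bs i * As i).reverse).prod

/-- The product of the moves in a noncanonical `2m+1`-round game, namely
`A_{m+1} * B_m * A_m * ⋯ * B_1 * A_1`, where player 1 makes the first and the
last move. -/
noncomputable def noncanonicalProd {n m : ℕ} (As : Fin (m + 1) → Matrix (Fin n) (Fin n) ℂ)
    (Bs : Fin m → Matrix (Fin n) (Fin n) ℂ) : Matrix (Fin n) (Fin n) ℂ :=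
  As (Fin.last m) * ((List.ofFn fun i : Fin m => Bs i * As i.castSucc).reverse).prod

/-- The underlying matrix of an element of a subgroup of the unitary group. -/
noncomputable def toMat {n : ℕ} {G : Subgroup (Matrix.unitaryGroup (Fin n) ℂ)} (x : G) :
    Matrix (Fin n) (Fin n) ℂ :=
  ((x : Matrix.unitaryGroup (Fin n) ℂ) : Matrix (Fin n) (Fin n) ℂ)

/-- `G` contains (the standard matrix representation of) the symmetric group `S_n`:
every `n × n` permutation matrix belongs to `G`. -/
def containsSn {n : ℕ} (G : Subgroup (Matrix.unitaryGroup (Fin n) ℂ)) : Prop :=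
  ∀ σ : Equiv.Perm (Fin n), ∃ P ∈ G,
    ((P : Matrix.unitaryGroup (Fin n) ℂ) : Matrix (Fin n) (Fin n) ℂ) = σ.permMatrix ℂ

lemma toMat_mul {n : ℕ} {G : Subgroup (Matrix.unitaryGroup (Fin n) ℂ)} (x y : G) :
    toMat (x * y) = toMat x * toMat y := rfl

lemma toMat_one {n : ℕ} {G : Subgroup (Matrix.unitaryGroup (Fin n) ℂ)} :
    toMat (1 : G) = 1 := rfl

/-- `toMat` as a monoid homomorphism. -/
noncomputable def toMatHom {n : ℕ} (G : Subgroup (Matrix.unitaryGroup (Fin n) ℂ)) :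
    G →* Matrix (Fin n) (Fin n) ℂ where
  toFun := toMat
  map_one' := rfl
  map_mul' _ _ := rfl

lemma toMat_mulVec_injective {n : ℕ} {G : Subgroup (Matrix.unitaryGroup (Fin n) ℂ)}
    (x : G) {v w : Fin n → ℂ}
    (h : (toMat x).mulVec v = (toMat x).mulVec w) : v = w := by
  have h2 := congrArg (fun z => (toMat x⁻¹).mulVec z) h
  simpa [Matrix.mulVec_mulVec, ← toMat_mul, toMat_one, Matrix.one_mulVec] using h2

lemma prod_toMat {n k : ℕ} {G : Subgroup (Matrix.unitaryGroup (Fin n) ℂ)} (f : Fin k → G) :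
    ((List.ofFn fun i => toMat (f i)).reverse).prod
      = toMat ((List.ofFn f).reverse.prod) := by
  have : (List.ofFn fun i => toMat (f i)) = (List.ofFn f).map (toMatHom G) := by
    rw [List.map_ofFn]; rfl
  rw [this, ← List.map_reverse, List.prod_hom]
  rfl

lemma ofFn_reverse_prod_succ {M : Type*} [Monoid M] {k : ℕ} (f : Fin (k + 1) → M) :
    ((List.ofFn f).reverse).prod
      = f (Fin.last k) * ((List.ofFn fun i : Fin k => f i.castSucc).reverse).prod := by
  rw [List.ofFn_succ', List.concat_eq_append, List.reverse_append]
  simp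

lemma permMatrix_mulVec {n : ℕ} (σ : Equiv.Perm (Fin n)) (u : Fin n → ℂ) (i : Fin n) :
    ((σ.permMatrix ℂ).mulVec u) i = u (σ i) := by
  simp [Matrix.mulVec, dotProduct, Equiv.Perm.permMatrix, PEquiv.toMatrix_apply,
    Equiv.toPEquiv_apply]

/-- In a noncanonical game of `2m+1` rounds where player 1 makes the first and the last
move, if both players use the same action group containing every permutation matrix,
then player 1 has no strong winning strategy. -/
theorem noncanonical_same_group_no_sws_player1
    (n m : ℕ) (hn : 2 ≤ n) (hm : 1 ≤ m)
    (A B : Subgroup (Matrix.unitaryGroup (Fin n) ℂ)) (hAB : A = B) (hSn : containsSn A)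
    (q0 qA qB : Fin n) (hq : qA ≠ qB)
    (As : Fin (m + 1) → A) :
    ∃ Bs : Fin m → B,
      (noncanonicalProd (fun i => toMat (As i)) (fun i => toMat (Bs i))).mulVec
        (Pi.single q0 1) ≠ Pi.single qA 1 := by
  subst hAB
  obtain ⟨k, rfl⟩ : ∃ k, m = k + 1 := ⟨m - 1, (Nat.succ_pred_eq_of_pos hm).symm⟩
  by_contra hcon
  push_neg at hcon
  set e0 : Fin n → ℂ := Pi.single q0 1 with he0
  set eA : Fin n → ℂ := Pi.single qA 1 with heA
  -- the fixed tail product of player 1's first `k+1` moves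
  set R : A := ((List.ofFn fun i : Fin (k + 1) => As i.castSucc).reverse).prod with hR
  set u : Fin n → ℂ := (toMat R).mulVec e0 with hu
  -- generic computation of the product for a given choice of player 2
  have prod_eq : ∀ Bs : Fin (k + 1) → A,
      noncanonicalProd (fun i => toMat (As i)) (fun i => toMat (Bs i))
        = toMat (As (Fin.last (k + 1))
            * ((List.ofFn fun i : Fin (k + 1) => Bs i * As i.castSucc).reverse).prod) := by
    intro Bs
    rw [toMat_mul, noncanonicalProd, ← prod_toMat]
    rfl
  -- key: every `g` in the group satisfies the winning condition with the tail `R`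
  have key : ∀ g : A,
      (toMat (As (Fin.last (k + 1)))).mulVec ((toMat g).mulVec u) = eA := by
    intro g
    have h1 := hcon (fun i => if i = Fin.last k then g else 1)
    rw [prod_eq] at h1
    have hlist : ((List.ofFn fun i : Fin (k + 1) =>
        (if i = Fin.last k then g else 1) * As i.castSucc).reverse).prod = g * R := by
      rw [ofFn_reverse_prod_succ, hR, ofFn_reverse_prod_succ]
      have : (List.ofFn fun i : Fin k =>
          (if i.castSucc = Fin.last k then g else 1) * As i.castSucc.castSucc)
          = List.ofFn fun i : Fin k => As i.castSucc.castSucc := by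
        congr 1
        funext i
        rw [if_neg (Fin.castSucc_lt_last i).ne, one_mul]
      rw [this, if_pos rfl, mul_assoc]
    rw [hlist, toMat_mul, toMat_mul, ← Matrix.mulVec_mulVec, ← Matrix.mulVec_mulVec] at h1
    exact h1
  -- every element of the group fixes `u`
  have hfix : ∀ g : A, (toMat g).mulVec u = u := by
    intro g
    have h1 := key g
    have h2 := key 1
    rw [toMat_one, Matrix.one_mulVec] at h2
    exact toMat_mulVec_injective (As (Fin.last (k + 1))) (h1.trans h2.symm)
  -- hence `u` is a constant vector
  have hconst : ∀ j : Fin n, u j = u q0 := by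
    intro j
    obtain ⟨P, hPmem, hPeq⟩ := hSn (Equiv.swap q0 j)
    have := hfix ⟨P, hPmem⟩
    have h3 : ((Equiv.swap q0 j).permMatrix ℂ).mulVec u = u := by
      rw [← hPeq]; exact this
    have h4 := congrFun h3 q0
    rw [permMatrix_mulVec, Equiv.swap_apply_left] at h4
    exact h4
  -- `R` fixes `u`, so `u = e0`
  have hRu : u = e0 := toMat_mulVec_injective R ((hfix R).trans hu)
  -- but `e0` is not constant since `n ≥ 2`
  haveI : Nontrivial (Fin n) := Fin.nontrivial_iff_two_le.mpr hn
  obtain ⟨j, hj⟩ := exists_ne q0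
  have h0 : u j = 0 := by rw [hRu, he0]; exact Pi.single_eq_of_ne hj 1
  have h1 : u q0 = 1 := by rw [hRu, he0]; exact Pi.single_eq_same q0 1
  rw [hconst j, h1] at h0
  exact one_ne_zero h0
end

section
/- In a canonical game of 2m rounds (m ≥ 1) on ℂ^n in which the action group B of player 2 contains every n×n permutation matrix and is a proper subgroup of the action group A of player 1 (S_n ≤ B < A ≤ U(n)), player 2 has no strong winning strategy: for every sequence B_1, …, B_m ∈ B there exists a sequence A_1, …, A_m ∈ A such that B_m A_m ⋯ B_1 A_1 e_{q0} ≠ e_{qB}. -/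
/-!
Player 1 can undo every move of player 2: since `B ≤ A`, answering `B_i` with `A_i = B_i⁻¹`
makes each pair `B_i A_i` the identity, and replacing the last answer by `B_m⁻¹ U` turns the
whole product into an arbitrary `U ∈ A`. Taking for `U` a permutation matrix (which lies in
`B ≤ A`) that does not send `e_{q0}` to `e_{qB}` defeats player 2.
-/

lemma List.prod_reverse_ofFn_eq_last {M : Type*} [Monoid M] {k : ℕ} (f : Fin (k + 1) → M)
    (h : ∀ i : Fin k, f i.castSucc = 1) :
    (List.ofFn f).reverse.prod = f (Fin.last k) := by
  rw [List.ofFn_succ', List.concat_eq_append, List.reverse_append, List.reverse_singleton,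
    List.singleton_append, List.prod_cons, List.prod_eq_one, mul_one]
  simpa [List.mem_ofFn] using h

lemma Equiv.Perm.exists_apply_ne {α : Type*} [DecidableEq α] [Nontrivial α] (a b : α) :
    ∃ σ : Equiv.Perm α, σ a ≠ b := by
  obtain ⟨c, hc⟩ := exists_ne b
  exact ⟨Equiv.swap a c, by rwa [Equiv.swap_apply_left]⟩

lemma Equiv.Perm.permMatrix_mulVec_single_ne {ι R : Type*} [Fintype ι] [DecidableEq ι]
    [CommRing R] [Nontrivial R] {σ : Equiv.Perm ι} {i j : ι} (h : σ j ≠ i) :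
    (σ.permMatrix R).mulVec (Pi.single i 1) ≠ Pi.single j 1 := by
  intro heq
  simpa [h] using congrFun heq j

section Unitary

variable {n : ℕ} {A B : Subgroup (Matrix.unitaryGroup (Fin n) ℂ)}

lemma toMat_mul_toMat_inclusion_inv_mul (hBA : B ≤ A) (b : B) (x : A) :
    toMat b * toMat (Subgroup.inclusion hBA b⁻¹ * x) = toMat x := by
  change ((b * (b⁻¹ * x) : Matrix.unitaryGroup (Fin n) ℂ) : Matrix (Fin n) (Fin n) ℂ) = _
  rw [Subgroup.coe_inv, mul_inv_cancel_left]
  rfl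

lemma exists_canonicalProd_eq {m : ℕ} (hm : 1 ≤ m) (hBA : B ≤ A) (Bs : Fin m → B) (U : A) :
    ∃ As : Fin m → A, canonicalProd (fun i => toMat (As i)) (fun i => toMat (Bs i)) = toMat U := by
  obtain ⟨k, rfl⟩ : ∃ k, m = k + 1 := ⟨m - 1, by omega⟩
  refine ⟨fun i => Subgroup.inclusion hBA (Bs i)⁻¹ * if i = Fin.last k then U else 1, ?_⟩
  rw [canonicalProd, List.prod_reverse_ofFn_eq_last]
  · simp only [toMat_mul_toMat_inclusion_inv_mul, if_pos]
  · intro i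
    simp only [toMat_mul_toMat_inclusion_inv_mul, if_neg (Fin.castSucc_lt_last i).ne]
    rfl

end Unitary

theorem canonical_B_lt_A_no_sws_player2_general
    (n m : ℕ) (hn : 2 ≤ n) (hm : 1 ≤ m)
    (A B : Subgroup (Matrix.unitaryGroup (Fin n) ℂ)) (hBA : B < A) (hSn : containsSn B)
    (q0 qB : Fin n)
    (Bs : Fin m → B) :
    ∃ As : Fin m → A,
      (canonicalProd (fun i => toMat (As i)) (fun i => toMat (Bs i))).mulVec
        (Pi.single q0 1) ≠ Pi.single qB 1 := by
  have : Nontrivial (Fin n) := Fin.nontrivial_iff_two_le.mpr hn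
  obtain ⟨σ, hσ⟩ := Equiv.Perm.exists_apply_ne qB q0
  obtain ⟨P, hPB, hPσ⟩ := hSn σ
  obtain ⟨As, hAs⟩ := exists_canonicalProd_eq hm hBA.le Bs ⟨P, hBA.le hPB⟩
  refine ⟨As, ?_⟩
  rw [hAs, toMat, hPσ]
  exact Equiv.Perm.permMatrix_mulVec_single_ne hσ

/-- In a canonical game of `2m` rounds where the action group `B` of player 2 contains
every permutation matrix and is a proper subgroup of the action group `A` of player 1
(`S_n ≤ B < A ≤ U(n)`), player 2 has no strong winning strategy. -/
theorem canonical_B_lt_A_no_sws_player2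
    (n m : ℕ) (hn : 2 ≤ n) (hm : 1 ≤ m)
    (A B : Subgroup (Matrix.unitaryGroup (Fin n) ℂ)) (hBA : B < A) (hSn : containsSn B)
    (q0 qA qB : Fin n) (hq : qA ≠ qB)
    (Bs : Fin m → B) :
    ∃ As : Fin m → A,
      (canonicalProd (fun i => toMat (As i)) (fun i => toMat (Bs i))).mulVec
        (Pi.single q0 1) ≠ Pi.single qB 1 :=
  canonical_B_lt_A_no_sws_player2_general n m hn hm A B hBA hSn q0 qB Bs
end
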